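/- arXiv:1511.07055 — 6 statements merged into one kernel-verified Lean document; each statement's English description precedes it below -/
import Mathlib

section
/- Let (L, L₀) be a nonlinear primitive pair. If J₁ and J₂ are ideals of L such that J₁ ∩ L₀ ≠ (0) and J₂ ≠ (0), then [J₁, J₂] ≠ (0). -/
theorem stmt4 (L : Type*) [LieRing L] [LieAlgebra ℂ L] [FiniteDimensional ℂ L]
    (L₀ : LieSubalgebra ℂ L)
    (htrans : ∀ J : LieIdeal ℂ L, (∀ x ∈ J, x ∈ L₀) → J = ⊥)
    (hproper : L₀ ≠ ⊤)
    (hmax : ∀ K : LieSubalgebra ℂ L, L₀ ≤ K → K = L₀ ∨ K = ⊤)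
    (hnonlin : ∃ x : L, x ≠ 0 ∧ x ∈ L₀ ∧ ∀ y : L, ⁅x, y⁆ ∈ L₀) :
    ∀ J₁ J₂ : LieIdeal ℂ L, (∃ x : L, x ≠ 0 ∧ x ∈ J₁ ∧ x ∈ L₀) → J₂ ≠ ⊥ →
      ∃ a ∈ J₁, ∃ b ∈ J₂, ⁅a, b⁆ ≠ 0 := by
  intro J₁ J₂ hx hJ₂
  obtain ⟨x, hx0, hxJ, hxL⟩ := hx
  by_contra hcon
  push_neg at hcon
  -- J₂ is not contained in L₀
  have hJ₂L : ∃ y, y ∈ J₂ ∧ y ∉ L₀ := by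
    by_contra hc
    push_neg at hc
    exact hJ₂ (htrans J₂ hc)
  obtain ⟨y, hyJ, hyL⟩ := hJ₂L
  -- The subalgebra K = L₀ + J₂ (as submodules)
  set M : Submodule ℂ L := L₀.toSubmodule ⊔ (J₂ : LieSubmodule ℂ L L).toSubmodule with hM
  have Kmem : ∀ {a b : L}, a ∈ M → b ∈ M → ⁅a, b⁆ ∈ M := by
    intro a b ha hb
    rw [Submodule.mem_sup] at ha hb
    obtain ⟨l, hl, j, hj, rfl⟩ := ha
    obtain ⟨l', hl', j', hj', rfl⟩ := hb
    rw [add_lie, lie_add, lie_add]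
    have h1 : ⁅l, l'⁆ ∈ M := Submodule.mem_sup_left (L₀.lie_mem hl hl')
    have h2 : ⁅l, j'⁆ ∈ M := Submodule.mem_sup_right (J₂.lie_mem hj')
    have h3 : ⁅j, l'⁆ ∈ M := by
      have heq : ⁅j, l'⁆ = -⁅l', j⁆ := by rw [← lie_skew]
      rw [heq]
      exact Submodule.mem_sup_right ((J₂ : LieSubmodule ℂ L L).neg_mem (J₂.lie_mem hj))
    have h4 : ⁅j, j'⁆ ∈ M := Submodule.mem_sup_right (J₂.lie_mem hj')
    exact M.add_mem (M.add_mem h1 h2) (M.add_mem h3 h4)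
  let K : LieSubalgebra ℂ L := { toSubmodule := M, lie_mem' := fun ha hb => Kmem ha hb }
  have hL₀K : L₀ ≤ K := by
    intro z hz
    exact Submodule.mem_sup_left hz
  have hKtop : K = ⊤ := by
    rcases hmax K hL₀K with h | h
    · exfalso
      apply hyL
      have hyK : y ∈ K := Submodule.mem_sup_right hyJ
      rw [h] at hyK
      exact hyK
    · exact h
  -- every element of L decomposes as l + j, l ∈ L₀, j ∈ J₂
  have hdecomp : ∀ z : L, ∃ l ∈ L₀, ∃ j ∈ J₂, l + j = z := by
    intro z
    have hz : z ∈ K := hKtop ▸ trivial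
    have hz' : z ∈ M := hz
    rw [Submodule.mem_sup] at hz'
    obtain ⟨l, hl, j, hj, h⟩ := hz'
    exact ⟨l, hl, j, hj, h⟩
  -- The ideal A = J₁ ∩ L₀
  let A : LieIdeal ℂ L :=
    { toSubmodule := (J₁ : LieSubmodule ℂ L L).toSubmodule ⊓ L₀.toSubmodule
      lie_mem := by
        intro z m hm
        obtain ⟨hm1, hm2⟩ := hm
        obtain ⟨l, hl, j, hj, rfl⟩ := hdecomp z
        have hjm : ⁅j, m⁆ = 0 := by
          have := hcon m hm1 j hj
          rw [← lie_skew, this, neg_zero]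
        constructor
        · show ⁅l + j, m⁆ ∈ (J₁ : LieSubmodule ℂ L L).toSubmodule
          rw [add_lie, hjm, add_zero]
          exact J₁.lie_mem hm1
        · show ⁅l + j, m⁆ ∈ L₀.toSubmodule
          rw [add_lie, hjm, add_zero]
          exact L₀.lie_mem hl hm2 }
  have hA : A = ⊥ := htrans A (fun a ha => ha.2)
  have hxA : x ∈ A := ⟨hxJ, hxL⟩
  rw [hA, LieSubmodule.mem_bot] at hxA
  exact hx0 hxA
end

section
/- Let (L, L₀) be a nonlinear primitive pair. If J is a nonzero ideal of L, then J ∩ L₀ ≠ (0). -/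
theorem stmt5 (L : Type*) [LieRing L] [LieAlgebra ℂ L] [FiniteDimensional ℂ L]
    (L₀ : LieSubalgebra ℂ L)
    (htrans : ∀ J : LieIdeal ℂ L, (∀ x ∈ J, x ∈ L₀) → J = ⊥)
    (hproper : L₀ ≠ ⊤)
    (hmax : ∀ K : LieSubalgebra ℂ L, L₀ ≤ K → K = L₀ ∨ K = ⊤)
    (hnonlin : ∃ x : L, x ≠ 0 ∧ x ∈ L₀ ∧ ∀ y : L, ⁅x, y⁆ ∈ L₀) :
    ∀ J : LieIdeal ℂ L, J ≠ ⊥ → ∃ x : L, x ≠ 0 ∧ x ∈ J ∧ x ∈ L₀ := by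
  intro J hJne
  by_contra hc
  push_neg at hc
  have hJL0 : ∀ x ∈ J, x ∈ L₀ → x = 0 := by
    intro x hx hx0
    by_contra hne
    exact (hc x hne hx) hx0
  -- K = L₀ + J as a Lie subalgebra
  let K : LieSubalgebra ℂ L :=
    { toSubmodule := L₀.toSubmodule ⊔ (J : Submodule ℂ L)
      lie_mem' := by
        intro x y hx hy
        rcases Submodule.mem_sup.1 hx with ⟨a, ha, j, hj, rfl⟩
        rcases Submodule.mem_sup.1 hy with ⟨a', ha', j', hj', rfl⟩
        have hj'' : j ∈ J := hj
        have hj''' : j' ∈ J := hj'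
        have h1 : ⁅a, a'⁆ ∈ L₀.toSubmodule := L₀.lie_mem ha ha'
        have h2 : ⁅a, j'⁆ ∈ J := J.lie_mem hj'''
        have h3 : ⁅j, a' + j'⁆ ∈ J := by
          have h4 : ⁅a' + j', j⁆ ∈ J := J.lie_mem hj''
          rw [← lie_skew]; exact J.neg_mem h4
        have h2' : ⁅a, j'⁆ ∈ (J : Submodule ℂ L) := h2
        have h3' : ⁅j, a' + j'⁆ ∈ (J : Submodule ℂ L) := h3
        have : ⁅a + j, a' + j'⁆ = ⁅a, a'⁆ + (⁅a, j'⁆ + ⁅j, a' + j'⁆) := by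
          simp [add_lie, lie_add]
          abel
        rw [this]
        exact Submodule.mem_sup.2 ⟨⁅a, a'⁆, h1, _, add_mem h2' h3', rfl⟩ }
  have hL0K : L₀ ≤ K := fun x hx => Submodule.mem_sup_left hx
  rcases hmax K hL0K with hK | hK
  · -- J ⊆ K = L₀
    have : ∀ x ∈ J, x ∈ L₀ := by
      intro x hx
      have : x ∈ K := Submodule.mem_sup_right (by exact hx)
      rwa [hK] at this
    exact hJne (htrans J this)
  · -- K = ⊤ : every element decomposes
    have hdecomp : ∀ x : L, ∃ a ∈ L₀, ∃ j ∈ J, x = a + j := by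
      intro x
      have hx : x ∈ K := by rw [hK]; trivial
      rcases Submodule.mem_sup.1 hx with ⟨a, ha, j, hj, rfl⟩
      exact ⟨a, ha, j, hj, rfl⟩
    -- The ideal L₁
    let I : LieIdeal ℂ L :=
      { carrier := {z | z ∈ L₀ ∧ ∀ y : L, ⁅z, y⁆ ∈ L₀}
        add_mem' := by
          rintro x y ⟨hx1, hx2⟩ ⟨hy1, hy2⟩
          refine ⟨L₀.add_mem hx1 hy1, fun w => ?_⟩
          rw [add_lie]
          exact L₀.add_mem (hx2 w) (hy2 w)
        zero_mem' := ⟨L₀.zero_mem, fun w => by rw [zero_lie]; exact L₀.zero_mem⟩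
        smul_mem' := by
          rintro c x ⟨hx1, hx2⟩
          refine ⟨L₀.smul_mem c hx1, fun w => ?_⟩
          rw [smul_lie]
          exact L₀.smul_mem c (hx2 w)
        lie_mem := by
          rintro y z ⟨hz1, hz2⟩
          rcases hdecomp y with ⟨a, ha, j, hj, rfl⟩
          have hzj : ⁅z, j⁆ = 0 := hJL0 _ (J.lie_mem hj) (hz2 j)
          have hjz : ⁅j, z⁆ = 0 := by
            have : ⁅j, z⁆ = -⁅z, j⁆ := by rw [lie_skew]
            rw [this, hzj, neg_zero]
          have heq : ⁅a + j, z⁆ = ⁅a, z⁆ := by rw [add_lie, hjz, add_zero]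
          rw [heq]
          refine ⟨L₀.lie_mem ha hz1, fun w => ?_⟩
          have : ⁅⁅a, z⁆, w⁆ = ⁅a, ⁅z, w⁆⁆ - ⁅z, ⁅a, w⁆⁆ := by
            rw [lie_lie]
          rw [this]
          exact L₀.sub_mem (L₀.lie_mem ha (hz2 w)) (hz2 ⁅a, w⁆) }
    -- I is a nonzero ideal contained in L₀ : contradiction with htrans
    obtain ⟨x, hxne, hxL0, hxlie⟩ := hnonlin
    have hxI : x ∈ I := ⟨hxL0, hxlie⟩
    have hIbot : I = ⊥ := htrans I (fun z hz => hz.1)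
    rw [hIbot] at hxI
    exact hxne ((LieSubmodule.mem_bot _).1 hxI)
end

section
/- Let (L, L₀) be a nonlinear primitive pair. Then two nonzero ideals of L are never in direct sum: if J₁ and J₂ are nonzero ideals of L, then J₁ ∩ J₂ ≠ (0). -/
/-- Helper: a set closed under the module and ideal operations and contained in `L₀`
consists only of `0`, by transitivity. -/
theorem aux_zero {L : Type*} [LieRing L] [LieAlgebra ℂ L]
    (L₀ : LieSubalgebra ℂ L)
    (htrans : ∀ J : LieIdeal ℂ L, (∀ x ∈ J, x ∈ L₀) → J = ⊥)
    (S : Set L)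
    (h0 : (0 : L) ∈ S)
    (hadd : ∀ {a b : L}, a ∈ S → b ∈ S → a + b ∈ S)
    (hsmul : ∀ (c : ℂ) {a : L}, a ∈ S → c • a ∈ S)
    (hlie : ∀ {x m : L}, m ∈ S → ⁅x, m⁆ ∈ S)
    (hsub : ∀ y ∈ S, y ∈ L₀) :
    ∀ y ∈ S, y = 0 := by
  set J : LieIdeal ℂ L :=
    { carrier := S
      add_mem' := hadd
      zero_mem' := h0
      smul_mem' := hsmul
      lie_mem := hlie } with hJdef
  have hmem : ∀ y : L, y ∈ J ↔ y ∈ S := fun y => Iff.rfl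
  have hbot : J = ⊥ := htrans J (fun x hx => hsub x ((hmem x).mp hx))
  intro y hy
  have h : y ∈ J := (hmem y).mpr hy
  rw [hbot] at h
  exact (LieSubmodule.mem_bot _).mp h

/-- Helper: for a nonzero ideal `J`, `L = L₀ + J`. -/
theorem aux_decomp {L : Type*} [LieRing L] [LieAlgebra ℂ L]
    (L₀ : LieSubalgebra ℂ L)
    (htrans : ∀ J : LieIdeal ℂ L, (∀ x ∈ J, x ∈ L₀) → J = ⊥)
    (hmax : ∀ K : LieSubalgebra ℂ L, L₀ ≤ K → K = L₀ ∨ K = ⊤)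
    (J : LieIdeal ℂ L) (hJ : J ≠ ⊥) :
    ∀ z : L, ∃ a ∈ L₀, ∃ b ∈ J, z = a + b := by
  set S : Submodule ℂ L := L₀.toSubmodule ⊔ J.toSubmodule with hS
  have hL₀S : ∀ z ∈ L₀, z ∈ S := fun z hz =>
    Submodule.mem_sup_left (show z ∈ L₀.toSubmodule from hz)
  have hJS : ∀ z ∈ J, z ∈ S := fun z hz =>
    Submodule.mem_sup_right (show z ∈ J.toSubmodule from hz)
  have hmemS : ∀ z : L, z ∈ S → ∃ a ∈ L₀, ∃ b ∈ J, z = a + b := by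
    intro z hz
    rw [hS, Submodule.mem_sup] at hz
    obtain ⟨a, ha, b, hb, h⟩ := hz
    exact ⟨a, ha, b, hb, h.symm⟩
  set K : LieSubalgebra ℂ L :=
    { S with
      lie_mem' := by
        intro u v hu hv
        obtain ⟨a, ha, b, hb, rfl⟩ := hmemS u hu
        obtain ⟨a', ha', b', hb', rfl⟩ := hmemS v hv
        have : ⁅a + b, a' + b'⁆ = ⁅a, a'⁆ + (⁅a, b'⁆ + (⁅b, a'⁆ + ⁅b, b'⁆)) := by
          rw [add_lie, lie_add, lie_add]; abel
        rw [this]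
        refine S.add_mem (hL₀S _ (L₀.lie_mem ha ha')) (S.add_mem ?_ (S.add_mem ?_ ?_))
        · exact hJS _ (J.lie_mem hb')
        · have : ⁅b, a'⁆ = -⁅a', b⁆ := (lie_skew b a').symm
          rw [this]
          exact hJS _ (neg_mem (J.lie_mem hb))
        · exact hJS _ (J.lie_mem hb') } with hKdef
  have hmemK : ∀ z : L, z ∈ K ↔ z ∈ S := fun z => Iff.rfl
  have hle : L₀ ≤ K := fun z hz => (hmemK z).mpr (hL₀S z hz)
  rcases hmax K hle with hK | hK
  · exfalso
    apply hJ
    apply htrans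
    intro b hb
    have : b ∈ K := (hmemK b).mpr (hJS b hb)
    rw [hK] at this
    exact this
  · intro z
    have : z ∈ K := by rw [hK]; exact LieSubalgebra.mem_top z
    exact hmemS z ((hmemK z).mp this)

theorem stmt6 (L : Type*) [LieRing L] [LieAlgebra ℂ L] [FiniteDimensional ℂ L]
    (L₀ : LieSubalgebra ℂ L)
    (htrans : ∀ J : LieIdeal ℂ L, (∀ x ∈ J, x ∈ L₀) → J = ⊥)
    (hproper : L₀ ≠ ⊤)
    (hmax : ∀ K : LieSubalgebra ℂ L, L₀ ≤ K → K = L₀ ∨ K = ⊤)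
    (hnonlin : ∃ x : L, x ≠ 0 ∧ x ∈ L₀ ∧ ∀ y : L, ⁅x, y⁆ ∈ L₀) :
    ∀ J₁ J₂ : LieIdeal ℂ L, J₁ ≠ ⊥ → J₂ ≠ ⊥ → ∃ x : L, x ≠ 0 ∧ x ∈ J₁ ∧ x ∈ J₂ := by
  intro J₁ J₂ hJ₁ hJ₂
  by_contra hcon
  push_neg at hcon
  obtain ⟨x, hx0, hxL0, hxb⟩ := hnonlin
  have skew : ∀ u v : L, ⁅u, v⁆ = -⁅v, u⁆ := fun u v => (lie_skew u v).symm
  -- J₁ ∩ J₂ = 0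
  have hzero : ∀ y : L, y ∈ J₁ → y ∈ J₂ → y = 0 := by
    intro y h1 h2
    by_contra h0
    exact hcon y h0 h1 h2
  -- [J₁, J₂] = 0
  have hcomm : ∀ b ∈ J₁, ∀ c ∈ J₂, ⁅b, c⁆ = 0 := by
    intro b hb c hc
    apply hzero
    · rw [skew]
      exact neg_mem (J₁.lie_mem hb)
    · exact J₂.lie_mem hc
  have hcomm' : ∀ c ∈ J₂, ∀ b ∈ J₁, ⁅c, b⁆ = 0 := by
    intro c hc b hb
    rw [skew, hcomm b hb c hc, neg_zero]
  have hdec₁ := aux_decomp L₀ htrans hmax J₁ hJ₁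
  have hdec₂ := aux_decomp L₀ htrans hmax J₂ hJ₂
  -- L₁ is an ideal of L₀
  have hL1 : ∀ a ∈ L₀, ⁅x, a⁆ ∈ L₀ ∧ ∀ w : L, ⁅⁅x, a⁆, w⁆ ∈ L₀ := by
    intro a ha
    refine ⟨hxb a, fun w => ?_⟩
    rw [lie_lie]
    exact L₀.sub_mem (hxb _) (L₀.lie_mem ha (hxb w))
  -- Step A: [x, Jᵢ] = 0. First a general lemma for an ideal J' with L = L₀ + J''
  -- where [J'', J'] = 0: the set J' ∩ L₁ is an ideal of L.
  have stepA : ∀ (Ja Jb : LieIdeal ℂ L),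
      (∀ z : L, ∃ a ∈ L₀, ∃ b ∈ Jb, z = a + b) →
      (∀ b ∈ Jb, ∀ c ∈ Ja, ⁅b, c⁆ = 0) →
      ∀ c ∈ Ja, ⁅x, c⁆ = 0 := by
    intro Ja Jb hdec hcm c hc
    set S : Set L := {y | y ∈ Ja ∧ y ∈ L₀ ∧ ∀ z : L, ⁅y, z⁆ ∈ L₀} with hSdef
    have hSzero : ∀ y ∈ S, y = 0 := by
      apply aux_zero L₀ htrans
      · exact ⟨Ja.zero_mem, L₀.zero_mem, fun z => by rw [zero_lie]; exact L₀.zero_mem⟩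
      · rintro a b ⟨ha1, ha2, ha3⟩ ⟨hb1, hb2, hb3⟩
        exact ⟨Ja.add_mem ha1 hb1, L₀.add_mem ha2 hb2,
          fun z => by rw [add_lie]; exact L₀.add_mem (ha3 z) (hb3 z)⟩
      · rintro t a ⟨ha1, ha2, ha3⟩
        exact ⟨Ja.smul_mem t ha1, L₀.smul_mem t ha2,
          fun z => by rw [smul_lie]; exact L₀.smul_mem t (ha3 z)⟩
      · rintro u y ⟨hy1, hy2, hy3⟩
        obtain ⟨a, ha, b, hb, rfl⟩ := hdec u
        have hb0 : ⁅b, y⁆ = 0 := hcm b hb y hy1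
        have heq : ⁅a + b, y⁆ = ⁅a, y⁆ := by rw [add_lie, hb0, add_zero]
        rw [heq]
        refine ⟨Ja.lie_mem hy1, L₀.lie_mem ha hy2, fun w => ?_⟩
        rw [lie_lie]
        exact L₀.sub_mem (L₀.lie_mem ha (hy3 w)) (hy3 _)
      · exact fun y hy => hy.2.1
    apply hSzero
    refine ⟨Ja.lie_mem hc, hxb c, fun w => ?_⟩
    obtain ⟨a, ha, b, hb, rfl⟩ := hdec w
    have hb0 : ⁅⁅x, c⁆, b⁆ = 0 := by
      rw [skew, hcm b hb _ (Ja.lie_mem hc), neg_zero]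
    rw [lie_add, hb0, add_zero, lie_lie]
    refine L₀.sub_mem (hxb _) ?_
    rw [skew]
    exact L₀.neg_mem ((hL1 a ha).2 c)
  have hxJ₂ : ∀ c ∈ J₂, ⁅x, c⁆ = 0 := stepA J₂ J₁ hdec₁ hcomm
  have hxJ₁ : ∀ c ∈ J₁, ⁅x, c⁆ = 0 := stepA J₁ J₂ hdec₂ hcomm'
  -- Step B: the set of y ∈ L₁ annihilating J₁ and J₂ is a nonzero ideal inside L₀.
  have hfinal : x = 0 := by
    apply aux_zero L₀ htrans
      {y : L | y ∈ L₀ ∧ (∀ z : L, ⁅y, z⁆ ∈ L₀) ∧ (∀ c ∈ J₁, ⁅y, c⁆ = 0) ∧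
        (∀ c ∈ J₂, ⁅y, c⁆ = 0)}
    · exact ⟨L₀.zero_mem, fun z => by rw [zero_lie]; exact L₀.zero_mem,
        fun c _ => zero_lie c, fun c _ => zero_lie c⟩
    · rintro a b ⟨ha1, ha2, ha3, ha4⟩ ⟨hb1, hb2, hb3, hb4⟩
      exact ⟨L₀.add_mem ha1 hb1,
        fun z => by rw [add_lie]; exact L₀.add_mem (ha2 z) (hb2 z),
        fun c hc => by rw [add_lie, ha3 c hc, hb3 c hc, add_zero],
        fun c hc => by rw [add_lie, ha4 c hc, hb4 c hc, add_zero]⟩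
    · rintro t a ⟨ha1, ha2, ha3, ha4⟩
      exact ⟨L₀.smul_mem t ha1,
        fun z => by rw [smul_lie]; exact L₀.smul_mem t (ha2 z),
        fun c hc => by rw [smul_lie, ha3 c hc, smul_zero],
        fun c hc => by rw [smul_lie, ha4 c hc, smul_zero]⟩
    · rintro u y ⟨hy1, hy2, hy3, hy4⟩
      obtain ⟨a, ha, b, hb, rfl⟩ := hdec₁ u
      have hb0 : ⁅b, y⁆ = 0 := by
        rw [skew, hy3 b hb, neg_zero]
      have heq : ⁅a + b, y⁆ = ⁅a, y⁆ := by rw [add_lie, hb0, add_zero]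
      rw [heq]
      refine ⟨L₀.lie_mem ha hy1, fun z => ?_, fun c hc => ?_, fun c hc => ?_⟩
      · rw [lie_lie]
        exact L₀.sub_mem (L₀.lie_mem ha (hy2 z)) (hy2 _)
      · rw [lie_lie, hy3 c hc, lie_zero, hy3 _ (J₁.lie_mem hc), sub_zero]
      · rw [lie_lie, hy4 c hc, lie_zero, hy4 _ (J₂.lie_mem hc), sub_zero]
    · exact fun y hy => hy.1
    · exact ⟨hxL0, hxb, hxJ₁, hxJ₂⟩
  exact hx0 hfinal
end

section
/- Let (L, L₀) be a nonlinear primitive pair. Then L is semisimple, i.e. L contains no nonzero abelian ideal. -/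
theorem stmt7 (L : Type*) [LieRing L] [LieAlgebra ℂ L] [FiniteDimensional ℂ L]
    (L₀ : LieSubalgebra ℂ L)
    (htrans : ∀ J : LieIdeal ℂ L, (∀ x ∈ J, x ∈ L₀) → J = ⊥)
    (hproper : L₀ ≠ ⊤)
    (hmax : ∀ K : LieSubalgebra ℂ L, L₀ ≤ K → K = L₀ ∨ K = ⊤)
    (hnonlin : ∃ x : L, x ≠ 0 ∧ x ∈ L₀ ∧ ∀ y : L, ⁅x, y⁆ ∈ L₀) :
    ∀ J : LieIdeal ℂ L, (∀ x ∈ J, ∀ y ∈ J, ⁅x, y⁆ = 0) → J = ⊥ := by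
  intro J hab
  by_cases hJ : ∀ x ∈ J, x ∈ L₀
  · exact htrans J hJ
  exfalso
  push_neg at hJ
  obtain ⟨z, hzJ, hzL₀⟩ := hJ
  obtain ⟨x, hx0, hxL₀, hx1⟩ := hnonlin
  -- The subalgebra L₀ + J
  set S : Submodule ℂ L := L₀.toSubmodule ⊔ (J : Submodule ℂ L) with hS
  have hL₀S : ∀ w : L, w ∈ L₀ → w ∈ S := fun w hw => Submodule.mem_sup_left hw
  have hJS : ∀ w : L, w ∈ J → w ∈ S := fun w hw => Submodule.mem_sup_right hw
  have Klie : ∀ {a b : L}, a ∈ S → b ∈ S → ⁅a, b⁆ ∈ S := by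
    intro a b ha hb
    obtain ⟨a₀, ha₀, a₁, ha₁, rfl⟩ := Submodule.mem_sup.mp ha
    obtain ⟨b₀, hb₀, b₁, hb₁, rfl⟩ := Submodule.mem_sup.mp hb
    have ha₁' : a₁ ∈ J := ha₁
    have hb₁' : b₁ ∈ J := hb₁
    have h1 : ⁅a₀, b₀⁆ ∈ S := hL₀S _ (L₀.lie_mem ha₀ hb₀)
    have h2 : ⁅a₀, b₁⁆ ∈ S := hJS _ (J.lie_mem hb₁')
    have h3 : ⁅a₁, b₀⁆ ∈ S := by
      have h := J.neg_mem (J.lie_mem ha₁' : ⁅b₀, a₁⁆ ∈ J)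
      rw [lie_skew] at h
      exact hJS _ h
    have h4 : ⁅a₁, b₁⁆ = 0 := hab _ ha₁' _ hb₁'
    have : ⁅a₀ + a₁, b₀ + b₁⁆ = ⁅a₀, b₀⁆ + ⁅a₀, b₁⁆ + (⁅a₁, b₀⁆ + ⁅a₁, b₁⁆) := by
      simp [lie_add, add_lie]; abel
    rw [this, h4, add_zero]
    exact S.add_mem (S.add_mem h1 h2) h3
  set K : LieSubalgebra ℂ L := { S with lie_mem' := fun ha hb => Klie ha hb } with hK
  have hmemK : ∀ w : L, (w ∈ K ↔ w ∈ S) := fun w => Iff.rfl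
  have hL₀K : L₀ ≤ K := fun w hw => hL₀S w hw
  rcases hmax K hL₀K with hKeq | hKeq
  · -- then J ≤ L₀, contradiction with z
    apply hzL₀
    have : z ∈ K := hJS z hzJ
    rwa [hKeq] at this
  -- K = ⊤ : decomposition
  have hdec : ∀ w : L, ∃ w₀ ∈ L₀, ∃ a ∈ J, w = w₀ + a := by
    intro w
    have : w ∈ K := by rw [hKeq]; trivial
    obtain ⟨w₀, h0, a, ha, hsum⟩ := Submodule.mem_sup.mp this
    exact ⟨w₀, h0, a, ha, hsum.symm⟩
  -- L₀ ∩ J is an ideal contained in L₀, hence ⊥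
  set I₂ : LieIdeal ℂ L :=
    { toSubmodule := L₀.toSubmodule ⊓ (J : Submodule ℂ L)
      lie_mem := by
        intro w y hy
        obtain ⟨hyL₀, hyJ⟩ := hy
        have hyJ' : y ∈ J := hyJ
        obtain ⟨w₀, hw₀, a, ha, rfl⟩ := hdec w
        have h1 : ⁅a, y⁆ = 0 := hab _ ha _ hyJ'
        have : ⁅w₀ + a, y⁆ = ⁅w₀, y⁆ := by rw [add_lie, h1, add_zero]
        rw [this]
        exact ⟨L₀.lie_mem hw₀ hyL₀, J.lie_mem hyJ'⟩ } with hI₂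
  have hI₂bot : I₂ = ⊥ := htrans I₂ (fun y hy => hy.1)
  have hkill : ∀ y : L, y ∈ L₀ → (∀ w : L, ⁅y, w⁆ ∈ L₀) → ∀ a ∈ J, ⁅y, a⁆ = 0 := by
    intro y hyL₀ hy1 a haJ
    have h1 : ⁅y, a⁆ ∈ I₂ := ⟨hy1 a, J.lie_mem haJ⟩
    rw [hI₂bot] at h1
    exact (LieSubmodule.mem_bot _).mp h1
  -- the ideal I = L₁ ∩ centralizer J, contained in L₀
  set I : LieIdeal ℂ L :=
    { carrier := {y : L | y ∈ L₀ ∧ (∀ w : L, ⁅y, w⁆ ∈ L₀) ∧ ∀ a ∈ J, ⁅y, a⁆ = 0}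
      zero_mem' := ⟨L₀.zero_mem, fun w => by simp [L₀.zero_mem], fun a _ => by simp⟩
      add_mem' := by
        rintro u v ⟨hu0, hu1, hu2⟩ ⟨hv0, hv1, hv2⟩
        refine ⟨L₀.add_mem hu0 hv0, fun w => ?_, fun a ha => ?_⟩
        · rw [add_lie]; exact L₀.add_mem (hu1 w) (hv1 w)
        · rw [add_lie, hu2 a ha, hv2 a ha, add_zero]
      smul_mem' := by
        rintro c u ⟨hu0, hu1, hu2⟩
        refine ⟨L₀.smul_mem c hu0, fun w => ?_, fun a ha => ?_⟩
        · rw [smul_lie]; exact L₀.smul_mem c (hu1 w)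
        · rw [smul_lie, hu2 a ha, smul_zero]
      lie_mem := by
        rintro w y ⟨hy0, hy1, hy2⟩
        obtain ⟨w₀, hw₀, a, ha, rfl⟩ := hdec w
        have hay : ⁅a, y⁆ = 0 := by
          rw [← lie_skew, hy2 a ha, neg_zero]
        have hred : ⁅w₀ + a, y⁆ = ⁅w₀, y⁆ := by rw [add_lie, hay, add_zero]
        rw [hred]
        refine ⟨L₀.lie_mem hw₀ hy0, fun w' => ?_, fun a' ha' => ?_⟩
        · obtain ⟨z₀, hz₀, b, hb, rfl⟩ := hdec w'
          have hbit : ⁅⁅w₀, y⁆, b⁆ = 0 := by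
            rw [lie_lie, hy2 b hb, lie_zero, zero_sub,
              hy2 _ (J.lie_mem hb), neg_zero]
          have h1 : ⁅⁅w₀, y⁆, z₀⁆ ∈ L₀ := by
            rw [lie_lie]
            exact L₀.sub_mem (L₀.lie_mem hw₀ (hy1 z₀)) (hy1 _)
          rw [lie_add, hbit, add_zero]
          exact h1
        · rw [lie_lie, hy2 a' ha', lie_zero, zero_sub,
            hy2 _ (J.lie_mem ha'), neg_zero] } with hI
  have hIbot : I = ⊥ := htrans I (fun y hy => hy.1)
  have hxI : x ∈ I := ⟨hxL₀, hx1, fun a ha => hkill x hxL₀ hx1 a ha⟩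
  rw [hIbot] at hxI
  exact hx0 ((LieSubmodule.mem_bot _).mp hxI)
end

section
/- Let (L, L₀) be a nonlinear primitive pair. Then L is a simple Lie algebra, the subspace L₁ = {x ∈ L₀ : [x, L] ⊆ L₀} is abelian, and L₂ = (0), where L₂ = {x ∈ L₁ : [x, L] ⊆ L₁}. -/
/-!
Let `L₀ = F₀ ⊇ F₁ ⊇ F₂ ⊇ ⋯` be the filtration `F_{k+1} = {x ∈ F_k | ⁅x, L⁆ ⊆ F_k}`, so that
`F₁ = L₁`, `F₂ = L₂` and `⁅F_i, F_j⁆ ⊆ F_{i+j}`. By transitivity it reaches `0`.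

Primitivity gives `L = L₀ + J` for every nonzero ideal `J`. If `C` is the centralizer of a nonzero
ideal `S` and `C ≠ 0`, then writing `L = L₀ + C` shows that the span of `⁅S, L₁⁆` is an ideal
inside `L₀`, hence `⁅S, L₁⁆ = 0`; writing `L = L₀ + S` then shows that `L₁` is an ideal inside
`L₀`, contradicting `L₁ ≠ 0`. So nonzero ideals have zero centralizer. In particular `L` has no
nonzero abelian ideal, so its Killing form is nondegenerate by Cartan's criterion, and a proper
nonzero ideal would be centralized by its nonzero Killing orthogonal: `L` is simple.

Finally for `z ∈ L₂` and any `y`, `ad z ∘ ad y` raises the filtration degree, so it is nilpotent and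
`κ(z, y) = 0`; hence `L₂ = 0` and `⁅L₁, L₁⁆ ⊆ L₂ = 0`.
-/

open LieAlgebra

namespace LieSubalgebra

section Filtration

variable {R L : Type*} [CommRing R] [LieRing L] [LieAlgebra R L]

/-- In the paper's notation `L₀.filtration 1 = L₁` and `L₀.filtration 2 = L₂`. -/
def filtration (L₀ : LieSubalgebra R L) : ℕ → Submodule R L
  | 0 => L₀.toSubmodule
  | k + 1 =>
    { carrier := {x | x ∈ filtration L₀ k ∧ ∀ y : L, ⁅x, y⁆ ∈ filtration L₀ k}
      add_mem' := fun hx hy =>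
        ⟨add_mem hx.1 hy.1, fun z => by rw [add_lie]; exact add_mem (hx.2 z) (hy.2 z)⟩
      zero_mem' := ⟨zero_mem _, fun z => by rw [zero_lie]; exact zero_mem _⟩
      smul_mem' := fun c x hx =>
        ⟨Submodule.smul_mem _ c hx.1,
          fun z => by rw [smul_lie]; exact Submodule.smul_mem _ c (hx.2 z)⟩ }

variable (L₀ : LieSubalgebra R L) {k : ℕ} {x y : L}

lemma filtration_antitone : Antitone L₀.filtration :=
  antitone_nat_of_succ_le fun _ _ hx => hx.1

lemma filtration_le : L₀.filtration k ≤ L₀.toSubmodule :=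
  L₀.filtration_antitone k.zero_le

lemma lie_mem_filtration_of_mem (hx : x ∈ L₀) (hy : y ∈ L₀.filtration k) :
    ⁅x, y⁆ ∈ L₀.filtration k := by
  induction k generalizing y with
  | zero => exact L₀.lie_mem hx hy
  | succ k ih =>
    refine ⟨ih hy.1, fun z => ?_⟩
    rw [lie_lie]
    exact sub_mem (ih (hy.2 z)) (hy.2 _)

lemma lie_mem_filtration_add {i j : ℕ} (hx : x ∈ L₀.filtration i) (hy : y ∈ L₀.filtration j) :
    ⁅x, y⁆ ∈ L₀.filtration (i + j) := by
  induction i generalizing x y j with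
  | zero => rw [zero_add]; exact L₀.lie_mem_filtration_of_mem hx hy
  | succ i ihi =>
    induction j generalizing y with
    | zero => rw [← lie_skew]; exact neg_mem (L₀.lie_mem_filtration_of_mem hy hx)
    | succ j ihj =>
      rw [show i + 1 + (j + 1) = i + (j + 1) + 1 by omega]
      refine ⟨ihi hx.1 hy, fun z => ?_⟩
      have h₁ := ihj (hy.2 z)
      rw [Nat.add_right_comm, add_assoc] at h₁
      rw [lie_lie, ← lie_skew y ⁅x, z⁆]
      exact sub_mem h₁ (neg_mem (ihi (hx.2 z) hy))

lemma killingForm_eq_zero_of_mem_filtration_two [IsReduced R] {N : ℕ}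
    (hN : L₀.filtration N = ⊥) {z : L} (hz : z ∈ L₀.filtration 2) (y : L) :
    killingForm R L z y = 0 := by
  set φ := ad R L z ∘ₗ ad R L y
  have hφ : ∀ k v, (φ ^ (k + 1)) v ∈ L₀.filtration (k + 1) := by
    intro k
    induction k with
    | zero => exact fun v => hz.2 _
    | succ k ih =>
      intro v
      have hyv : ⁅y, (φ ^ (k + 1)) v⁆ ∈ L₀.filtration k := by
        rw [← lie_skew]
        exact neg_mem ((ih v).2 y)
      rw [pow_succ', Module.End.mul_apply, show k + 1 + 1 = 2 + k by omega]
      exact L₀.lie_mem_filtration_add hz hyv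
  have hnil : IsNilpotent φ := ⟨N + 1, LinearMap.ext fun v =>
    (Submodule.mem_bot R).mp (hN ▸ L₀.filtration_antitone N.le_succ (hφ N v))⟩
  rw [killingForm_apply_apply]
  exact (LinearMap.isNilpotent_trace_of_isNilpotent hnil).eq_zero

end Filtration

section Transitive

variable {R L : Type*} [CommRing R] [LieRing L] [LieAlgebra R L] {L₀ : LieSubalgebra R L}

variable (L₀) in
def IsTransitive : Prop :=
  ∀ J : LieIdeal R L, (∀ x ∈ J, x ∈ L₀) → J = ⊥

lemma IsTransitive.eq_bot_of_le_of_lie_mem (htrans : L₀.IsTransitive) {V : Submodule R L}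
    (hV : V ≤ L₀.toSubmodule) (hlie : ∀ v ∈ V, ∀ y : L, ⁅y, v⁆ ∈ V) : V = ⊥ := by
  have h := htrans { V with lie_mem := fun hv => hlie _ hv _ } hV
  simpa using congr_arg LieSubmodule.toSubmodule h

lemma IsTransitive.exists_filtration_eq_bot [IsArtinian R L] (htrans : L₀.IsTransitive) :
    ∃ k, L₀.filtration k = ⊥ := by
  obtain ⟨n, hn⟩ := IsArtinian.monotone_stabilizes
    ⟨fun k => OrderDual.toDual (L₀.filtration k), L₀.filtration_antitone⟩
  refine ⟨n, htrans.eq_bot_of_le_of_lie_mem L₀.filtration_le fun v hv y => ?_⟩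
  have hv' : v ∈ L₀.filtration (n + 1) := by
    rwa [← show L₀.filtration n = L₀.filtration (n + 1) from hn (n + 1) n.le_succ]
  rw [← lie_skew]
  exact neg_mem (hv'.2 y)

lemma IsTransitive.toSubmodule_sup_eq_top (htrans : L₀.IsTransitive)
    (hmax : ∀ K : LieSubalgebra R L, L₀ ≤ K → K = L₀ ∨ K = ⊤) {J : LieIdeal R L} (hJ : J ≠ ⊥) :
    L₀.toSubmodule ⊔ J.toSubmodule = ⊤ := by
  let K : LieSubalgebra R L :=
    { toSubmodule := L₀.toSubmodule ⊔ J.toSubmodule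
      lie_mem' := by
        intro u v hu hv
        obtain ⟨a, ha, b, hb, rfl⟩ := Submodule.mem_sup.mp hu
        obtain ⟨c, hc, d, hd, rfl⟩ := Submodule.mem_sup.mp hv
        rw [add_lie, lie_add, add_assoc]
        exact Submodule.add_mem_sup (L₀.lie_mem ha hc)
          (add_mem (J.lie_mem hd) (lie_mem_left R L J _ _ hb)) }
  rcases hmax K fun x hx => Submodule.mem_sup_left hx with hK | hK
  · exact absurd (htrans J fun x hx => hK ▸ (Submodule.mem_sup_right hx : x ∈ K)) hJ
  · exact congr_arg LieSubalgebra.toSubmodule hK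

lemma IsTransitive.ker_eq_bot (htrans : L₀.IsTransitive)
    (hmax : ∀ K : LieSubalgebra R L, L₀ ≤ K → K = L₀ ∨ K = ⊤) (hL₁ : L₀.filtration 1 ≠ ⊥)
    {S : LieIdeal R L} (hS : S ≠ ⊥) : LieModule.ker R L S = ⊥ := by
  by_contra hC
  have hSL₁ : ∀ s ∈ S, ∀ t ∈ L₀.filtration 1, ⁅s, t⁆ = 0 := by
    let V := Submodule.span R {z | ∃ s ∈ S, ∃ t ∈ L₀.filtration 1, ⁅s, t⁆ = z}
    have hV : V = ⊥ := by
      refine htrans.eq_bot_of_le_of_lie_mem (Submodule.span_le.mpr ?_) fun v hv y => ?_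
      · rintro _ ⟨s, -, t, ht, rfl⟩
        rw [← lie_skew]
        exact neg_mem (ht.2 s)
      obtain ⟨a, ha, c, hc, rfl⟩ :=
        Submodule.mem_sup.mp (htrans.toSubmodule_sup_eq_top hmax hC ▸ Submodule.mem_top : y ∈ _)
      refine (Submodule.span_le.mpr ?_ hv : v ∈ V.comap (ad R L (a + c)))
      rintro _ ⟨s, hs, t, ht, rfl⟩
      have hcst : ⁅c, ⁅s, t⁆⁆ = 0 := by
        simpa using congr_arg Subtype.val
          ((LieModule.mem_ker R L S c).mp hc ⟨⁅s, t⁆, lie_mem_left R L S s t hs⟩)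
      change ⁅a + c, ⁅s, t⁆⁆ ∈ V
      rw [add_lie, hcst, add_zero, leibniz_lie]
      exact add_mem (Submodule.subset_span ⟨_, S.lie_mem hs, t, ht, rfl⟩)
        (Submodule.subset_span ⟨s, hs, _, L₀.lie_mem_filtration_of_mem ha ht, rfl⟩)
    intro s hs t ht
    exact (Submodule.mem_bot R).mp (hV ▸ Submodule.subset_span ⟨s, hs, t, ht, rfl⟩)
  refine hL₁ (htrans.eq_bot_of_le_of_lie_mem L₀.filtration_le fun t ht y => ?_)
  obtain ⟨a, ha, s, hs, rfl⟩ :=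
    Submodule.mem_sup.mp (htrans.toSubmodule_sup_eq_top hmax hS ▸ Submodule.mem_top : y ∈ _)
  rw [add_lie, hSL₁ s hs t ht, add_zero]
  exact L₀.lie_mem_filtration_of_mem ha ht

lemma IsTransitive.hasTrivialRadical (htrans : L₀.IsTransitive)
    (hmax : ∀ K : LieSubalgebra R L, L₀ ≤ K → K = L₀ ∨ K = ⊤) (hL₁ : L₀.filtration 1 ≠ ⊥) :
    HasTrivialRadical R L :=
  (hasTrivialRadical_iff_no_abelian_ideals R L).mpr fun _ hI => by_contra fun hne => hne <|
    le_bot_iff.mp <|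
      ((LieIdeal.isLieAbelian_iff R L).mp hI).trans (htrans.ker_eq_bot hmax hL₁ hne).le

lemma IsTransitive.filtration_two_eq_bot [IsReduced R] [IsArtinian R L] [IsKilling R L]
    (htrans : L₀.IsTransitive) :
    L₀.filtration 2 = ⊥ := by
  obtain ⟨N, hN⟩ := htrans.exists_filtration_eq_bot
  refine (Submodule.eq_bot_iff _).mpr fun z hz => ?_
  have hz : z ∈ LinearMap.ker (killingForm R L) :=
    LinearMap.ext (L₀.killingForm_eq_zero_of_mem_filtration_two hN hz)
  simpa using hz

end Transitive

section Killing

variable {𝕜 L : Type*} [Field 𝕜] [CharZero 𝕜] [LieRing L] [LieAlgebra 𝕜 L] [FiniteDimensional 𝕜 L]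
  {L₀ : LieSubalgebra 𝕜 L}

lemma IsTransitive.isSimple (htrans : L₀.IsTransitive)
    (hmax : ∀ K : LieSubalgebra 𝕜 L, L₀ ≤ K → K = L₀ ∨ K = ⊤) (hL₁ : L₀.filtration 1 ≠ ⊥) :
    IsSimple 𝕜 L := by
  have := htrans.hasTrivialRadical hmax hL₁
  refine ⟨fun I => ?_, fun _ => ?_⟩
  · by_contra! hI
    have hcompl := I.isCompl_killingCompl
    have hker : I.killingCompl ≤ LieModule.ker 𝕜 L I := fun c hc =>
      (LieModule.mem_ker 𝕜 L I c).mpr fun m => Subtype.ext <| by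
        have hcm : ⁅c, (m : L)⁆ ∈ I ⊓ I.killingCompl :=
          ⟨lie_mem_right 𝕜 L I c m m.2, lie_mem_left 𝕜 L I.killingCompl c m hc⟩
        simpa [hcompl.inf_eq_bot] using hcm
    rw [htrans.ker_eq_bot hmax hL₁ hI.1, le_bot_iff] at hker
    exact hI.2 (eq_top_of_isCompl_bot (hker ▸ hcompl))
  · have := subsingleton_of_hasTrivialRadical_lie_abelian 𝕜 L
    exact hL₁ Submodule.eq_bot_of_subsingleton

end Killing

end LieSubalgebra

theorem stmt8_general (L : Type*) [LieRing L] [LieAlgebra ℂ L] [FiniteDimensional ℂ L]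
    (L₀ : LieSubalgebra ℂ L)
    (htrans : ∀ J : LieIdeal ℂ L, (∀ x ∈ J, x ∈ L₀) → J = ⊥)
    (hmax : ∀ K : LieSubalgebra ℂ L, L₀ ≤ K → K = L₀ ∨ K = ⊤)
    (hnonlin : ∃ x : L, x ≠ 0 ∧ x ∈ L₀ ∧ ∀ y : L, ⁅x, y⁆ ∈ L₀) :
    LieAlgebra.IsSimple ℂ L ∧
    (∀ x ∈ {z : L | z ∈ L₀ ∧ ∀ w : L, ⁅z, w⁆ ∈ L₀},
       ∀ y ∈ {z : L | z ∈ L₀ ∧ ∀ w : L, ⁅z, w⁆ ∈ L₀}, ⁅x, y⁆ = 0) ∧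
    (∀ x ∈ {z : L | z ∈ L₀ ∧ ∀ w : L, ⁅z, w⁆ ∈ L₀},
       (∀ y : L, ⁅x, y⁆ ∈ {z : L | z ∈ L₀ ∧ ∀ w : L, ⁅z, w⁆ ∈ L₀}) → x = 0) := by
  have htrans : L₀.IsTransitive := htrans
  obtain ⟨x₀, hx₀, hx₀L₁⟩ := hnonlin
  have hL₁ : L₀.filtration 1 ≠ ⊥ := fun h => hx₀ ((Submodule.eq_bot_iff _).mp h x₀ hx₀L₁)
  have := htrans.hasTrivialRadical hmax hL₁
  have hL₂ := htrans.filtration_two_eq_bot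
  refine ⟨htrans.isSimple hmax hL₁, fun x hx y hy => ?_, fun x hx hxL₁ => ?_⟩
  · exact (Submodule.mem_bot ℂ).mp (hL₂ ▸ L₀.lie_mem_filtration_add (i := 1) (j := 1) hx hy)
  · exact (Submodule.mem_bot ℂ).mp (hL₂ ▸ ⟨hx, hxL₁⟩)

/-- For a nonlinear primitive pair `(L, L₀)`, the Lie algebra `L` is simple,
`L₁ = {x ∈ L₀ : [x, L] ⊆ L₀}` is abelian, and `L₂ = {x ∈ L₁ : [x, L] ⊆ L₁} = (0)`. -/
theorem stmt8 (L : Type*) [LieRing L] [LieAlgebra ℂ L] [FiniteDimensional ℂ L]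
    (L₀ : LieSubalgebra ℂ L)
    (htrans : ∀ J : LieIdeal ℂ L, (∀ x ∈ J, x ∈ L₀) → J = ⊥)
    (hproper : L₀ ≠ ⊤)
    (hmax : ∀ K : LieSubalgebra ℂ L, L₀ ≤ K → K = L₀ ∨ K = ⊤)
    (hnonlin : ∃ x : L, x ≠ 0 ∧ x ∈ L₀ ∧ ∀ y : L, ⁅x, y⁆ ∈ L₀) :
    LieAlgebra.IsSimple ℂ L ∧
    (∀ x ∈ {z : L | z ∈ L₀ ∧ ∀ w : L, ⁅z, w⁆ ∈ L₀},
       ∀ y ∈ {z : L | z ∈ L₀ ∧ ∀ w : L, ⁅z, w⁆ ∈ L₀}, ⁅x, y⁆ = 0) ∧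
    (∀ x ∈ {z : L | z ∈ L₀ ∧ ∀ w : L, ⁅z, w⁆ ∈ L₀},
       (∀ y : L, ⁅x, y⁆ ∈ {z : L | z ∈ L₀ ∧ ∀ w : L, ⁅z, w⁆ ∈ L₀}) → x = 0) :=
  stmt8_general L L₀ htrans hmax hnonlin
end

section
/- Let g = ⊕_{p ≥ -1} g^p be a transitive nonlinear irreducible ℤ-graded finite-dimensional complex Lie algebra of depth 1, and set g₀ = ⊕_{p ≥ 0} g^p. Then g₀ is a proper subalgebra of g and the isotropy representation of g₀ on g/g₀ is irreducible: every subspace M with g₀ ⊆ M ⊆ g and [g₀, M] ⊆ M equals g₀ or g. -/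
/-!
The grading splits `g` as `g^{-1} ⊕ g₀`, so `g₀` is proper because `g^{-1} ≠ 0`. In a modular
lattice every `M ⊇ g₀` equals `g₀ ⊔ (g^{-1} ⊓ M)`, and `g^{-1} ⊓ M` is `g^0`-invariant, hence is
`0` or `g^{-1}` by irreducibility.
-/

theorem IsCompl.eq_or_eq_top_of_le {α : Type*} [Lattice α] [BoundedOrder α] [IsModularLattice α]
    {a b m : α} (h : IsCompl a b) (hbm : b ≤ m) (ham : a ⊓ m = ⊥ ∨ a ⊓ m = a) :
    m = b ∨ m = ⊤ := by
  have hm : m = b ⊔ a ⊓ m := by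
    rw [← sup_inf_assoc_of_le a hbm, h.symm.sup_eq_top, top_inf_eq]
  rcases ham with ham | ham
  · exact .inl (by rw [hm, ham, sup_bot_eq])
  · exact .inr (by rw [hm, ham, h.symm.sup_eq_top])

theorem DirectSum.IsInternal.isCompl_neg_one_biSup_nonneg {R M : Type*} [Ring R]
    [AddCommGroup M] [Module R M] {g : ℤ → Submodule R M} (hg : DirectSum.IsInternal g)
    (hdepth : ∀ p : ℤ, p < -1 → g p = ⊥) :
    IsCompl (g (-1)) (⨆ p ∈ {q : ℤ | 0 ≤ q}, g p) := by
  refine ⟨hg.submodule_iSupIndep.disjoint_biSup (by simp), codisjoint_iff.mpr ?_⟩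
  rw [eq_top_iff, ← hg.submodule_iSup_eq_top]
  refine iSup_le fun p => ?_
  rcases lt_trichotomy p (-1) with hp | rfl | hp
  · simp [hdepth p hp]
  · exact le_sup_left
  · exact le_sup_of_le_right (le_biSup (s := {q : ℤ | 0 ≤ q}) g (show 0 ≤ p by omega))

theorem stmt13_general (L : Type*) [LieRing L] [LieAlgebra ℂ L]
    (g : ℤ → Submodule ℂ L)
    (hdirect : DirectSum.IsInternal g)
    (hbracket : ∀ p q : ℤ, ∀ x ∈ g p, ∀ y ∈ g q, ⁅x, y⁆ ∈ g (p + q))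
    (hdepth : ∀ p : ℤ, p < -1 → g p = ⊥)
    (hdepth1 : g (-1) ≠ ⊥)
    (hirr : ∀ m : Submodule ℂ L, m ≤ g (-1) →
      (∀ x ∈ g 0, ∀ v ∈ m, ⁅x, v⁆ ∈ m) → m = ⊥ ∨ m = g (-1)) :
    (⨆ p ∈ {q : ℤ | 0 ≤ q}, g p) ≠ ⊤ ∧
    (∀ M : Submodule ℂ L, (⨆ p ∈ {q : ℤ | 0 ≤ q}, g p) ≤ M →
      (∀ x ∈ (⨆ p ∈ {q : ℤ | 0 ≤ q}, g p), ∀ m ∈ M, ⁅x, m⁆ ∈ M) →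
      M = (⨆ p ∈ {q : ℤ | 0 ≤ q}, g p) ∨ M = ⊤) := by
  have hcompl := hdirect.isCompl_neg_one_biSup_nonneg hdepth
  refine ⟨fun htop => hdepth1 (eq_bot_of_isCompl_top (htop ▸ hcompl)), fun M hM hMinv => ?_⟩
  refine hcompl.eq_or_eq_top_of_le hM (hirr _ inf_le_left fun x hx v hv => ⟨?_, ?_⟩)
  · simpa using hbracket 0 (-1) x hx v hv.1
  · exact hMinv x (le_biSup (s := {q : ℤ | 0 ≤ q}) g (le_refl (0 : ℤ)) hx) v hv.2

theorem stmt13 (L : Type*) [LieRing L] [LieAlgebra ℂ L] [FiniteDimensional ℂ L]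
    (g : ℤ → Submodule ℂ L)
    (hdirect : DirectSum.IsInternal g)
    (hbracket : ∀ p q : ℤ, ∀ x ∈ g p, ∀ y ∈ g q, ⁅x, y⁆ ∈ g (p + q))
    (hdepth : ∀ p : ℤ, p < -1 → g p = ⊥)
    (hdepth1 : g (-1) ≠ ⊥)
    (htrans : ∀ p : ℤ, 0 ≤ p → ∀ x ∈ g p, (∀ y ∈ g (-1), ⁅x, y⁆ = 0) → x = 0)
    (hirr : ∀ m : Submodule ℂ L, m ≤ g (-1) →
      (∀ x ∈ g 0, ∀ v ∈ m, ⁅x, v⁆ ∈ m) → m = ⊥ ∨ m = g (-1))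
    (hnonlin : g 1 ≠ ⊥) :
    (⨆ p ∈ {q : ℤ | 0 ≤ q}, g p) ≠ ⊤ ∧
    (∀ M : Submodule ℂ L, (⨆ p ∈ {q : ℤ | 0 ≤ q}, g p) ≤ M →
      (∀ x ∈ (⨆ p ∈ {q : ℤ | 0 ≤ q}, g p), ∀ m ∈ M, ⁅x, m⁆ ∈ M) →
      M = (⨆ p ∈ {q : ℤ | 0 ≤ q}, g p) ∨ M = ⊤) :=
  stmt13_general L g hdirect hbracket hdepth hdepth1 hirr
end
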